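/- If A is an integral ring extension of a commutative ring B, then W_n(A) is integral over W_n(B) (p-typical Witt vectors). -/

import Mathlib

/-!
Compose `mapT` with the ghost map `W_n(A) → A^{n+1}`. Coordinatewise the composite is
`W_n(B) → B → A`; the first map is integral because `b` is a root of `X ^ p ^ i - [b]`, the
second because `A` is integral over `B`, and a map into a finite product is integral as soon as
each coordinate is. Integrality then descends along the ghost map because its kernel is nil: if
the ghost components of `x = V y` vanish up to index `m`, then `x ^ 2 = V (p y ^ 2)` and those of
`p y ^ 2` vanish up to `m - 1`.
-/

open Polynomial

theorem RingHom.IsIntegral.tower_bot_of_ker_le_nilradical {R S T : Type*} [CommRing R]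
    [CommRing S] [CommRing T] (f : R →+* S) (g : S →+* T) (hg : RingHom.ker g ≤ nilradical S)
    (hfg : (g.comp f).IsIntegral) : f.IsIntegral := by
  intro x
  obtain ⟨q, hq, hqx⟩ := hfg (g x)
  obtain ⟨k, hk⟩ : IsNilpotent (q.eval₂ f x) := by
    rw [← mem_nilradical]
    apply hg
    rwa [RingHom.mem_ker, hom_eval₂]
  exact ⟨q ^ k, hq.pow k, by rw [eval₂_pow, hk]⟩

theorem RingHom.IsIntegral.of_forall_evalRingHom_comp {R ι : Type*} [Fintype ι]
    {S : ι → Type*} [CommRing R] [∀ i, CommRing (S i)] (f : R →+* ∀ i, S i)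
    (h : ∀ i, ((Pi.evalRingHom S i).comp f).IsIntegral) : f.IsIntegral := by
  intro x
  choose q hq hqx using fun i => h i (x i)
  refine ⟨∏ i, q i, monic_prod_of_monic _ _ fun i _ => hq i, funext fun j => ?_⟩
  rw [eval₂_finsetProd, Finset.prod_apply, Pi.zero_apply]
  refine Finset.prod_eq_zero (Finset.mem_univ j) ?_
  change Pi.evalRingHom S j (eval₂ f x (q j)) = 0
  rw [hom_eval₂]
  exact hqx j

namespace WittVector

variable {p : ℕ} [Fact p.Prime] {R : Type*} [CommRing R]

theorem ghostComponent_zero_apply (x : WittVector p R) : ghostComponent 0 x = x.coeff 0 := by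
  simp [ghostComponent_apply, wittPolynomial_zero]

theorem ghostComponent_map {S : Type*} [CommRing S] (f : R →+* S) (i : ℕ) (x : WittVector p R) :
    ghostComponent i (map f x) = f (ghostComponent i x) := by
  simp only [ghostComponent_apply, aeval_wittPolynomial, map_sum, map_mul, map_pow, map_coeff,
    map_natCast]

theorem ker_truncate_le_ker_ghostComponent {n i : ℕ} (hi : i < n) :
    RingHom.ker (truncate (p := p) (R := R) n) ≤ RingHom.ker (ghostComponent i) := by
  intro x hx
  rw [mem_ker_truncate] at hx
  rw [RingHom.mem_ker, ghostComponent_apply, aeval_wittPolynomial]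
  refine Finset.sum_eq_zero fun j hj => ?_
  rw [hx j (by grind), zero_pow (pow_ne_zero _ (Fact.out : p.Prime).ne_zero), mul_zero]

theorem verschiebung_mul_verschiebung (x y : WittVector p R) :
    verschiebung x * verschiebung y = verschiebung (x * y * (p : WittVector p R)) := by
  rw [← verschiebung_mul_frobenius, frobenius_verschiebung, mul_assoc]

theorem verschiebung_pow_succ (x : WittVector p R) (k : ℕ) :
    verschiebung x ^ (k + 1) = verschiebung (x ^ (k + 1) * (p : WittVector p R) ^ k) := by
  induction k with
  | zero => simp
  | succ k ih =>
    rw [pow_succ, ih, verschiebung_mul_verschiebung]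
    ring_nf

theorem verschiebung_mem_ker_truncate {m : ℕ} {x : WittVector p R}
    (hx : x ∈ RingHom.ker (truncate (p := p) m)) :
    verschiebung x ∈ RingHom.ker (truncate (p := p) (m + 1)) := by
  rw [mem_ker_truncate] at hx ⊢
  rintro (_ | i) hi
  · exact verschiebung_coeff_zero x
  · rw [verschiebung_coeff_succ]
    exact hx i (by omega)

theorem pow_two_pow_mem_ker_truncate {m : ℕ} {x : WittVector p R}
    (hx : ∀ i < m, ghostComponent i x = 0) :
    x ^ 2 ^ m ∈ RingHom.ker (truncate (p := p) m) := by
  induction m generalizing x with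
  | zero => exact (mem_ker_truncate ..).mpr fun i hi => absurd hi i.not_lt_zero
  | succ m ih =>
    obtain ⟨y, rfl⟩ : ∃ y, x = verschiebung y := by
      refine ⟨x.shift 1, eq_iterate_verschiebung (n := 1) fun i hi => ?_⟩
      rw [Nat.lt_one_iff.mp hi, ← ghostComponent_zero_apply]
      exact hx 0 m.succ_pos
    have hy : ∀ i < m, ghostComponent i (y * y * (p : WittVector p R)) = 0 := by
      intro i hi
      have h := hx (i + 1) (by omega)
      rw [ghostComponent_verschiebung] at h
      rw [map_mul, map_mul, map_natCast, mul_comm, ← mul_assoc, h, zero_mul]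
    obtain ⟨k, hk⟩ : ∃ k, 2 ^ m = k + 1 := Nat.exists_eq_add_one.mpr (Nat.two_pow_pos m)
    rw [pow_succ, pow_mul', sq, verschiebung_mul_verschiebung, hk, verschiebung_pow_succ]
    exact verschiebung_mem_ker_truncate (Ideal.mul_mem_right _ _ (hk ▸ ih hy))

end WittVector

namespace TruncatedWittVector

variable {p : ℕ} [Fact p.Prime] {n : ℕ} {R : Type*} [CommRing R]

variable (p n R) in
noncomputable def ghostMap : TruncatedWittVector p n R →+* (Fin n → R) :=
  (WittVector.truncate n).liftOfSurjective (WittVector.truncate_surjective p n R)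
    ⟨RingHom.pi fun i : Fin n => WittVector.ghostComponent i, fun _ hx =>
      RingHom.mem_ker.mpr <| funext fun i =>
        WittVector.ker_truncate_le_ker_ghostComponent i.isLt hx⟩

theorem ghostMap_truncate (x : WittVector p R) (i : Fin n) :
    ghostMap p n R (WittVector.truncate n x) i = WittVector.ghostComponent i x :=
  congrFun (RingHom.liftOfSurjective_comp_apply _ _ _ x) i

theorem ker_ghostMap_le_nilradical : RingHom.ker (ghostMap p n R) ≤ nilradical _ := by
  intro z hz
  obtain ⟨x, rfl⟩ := WittVector.truncate_surjective p n R z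
  rw [RingHom.mem_ker] at hz
  refine mem_nilradical.mpr ⟨2 ^ n, ?_⟩
  rw [← map_pow, ← RingHom.mem_ker]
  exact WittVector.pow_two_pow_mem_ker_truncate fun i hi =>
    (ghostMap_truncate x ⟨i, hi⟩).symm.trans (congrFun hz ⟨i, hi⟩)

theorem evalRingHom_comp_ghostMap_isIntegral (i : Fin n) :
    ((Pi.evalRingHom _ i).comp (ghostMap p n R)).IsIntegral := by
  intro b
  refine ⟨X ^ p ^ (i : ℕ) - C (WittVector.truncate n (WittVector.teichmuller p b)),
    monic_X_pow_sub_C _ (pow_ne_zero _ (Fact.out : p.Prime).ne_zero), ?_⟩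
  simp [ghostMap_truncate, WittVector.ghostComponent_teichmuller]

end TruncatedWittVector

/-- Normalized indexing: `W_n = TruncatedWittVector p (n + 1)`, and `mapT` is the map
`W_n(B) → W_n(A)` induced by `algebraMap B A`, pinned down by `hmap`. -/
theorem witt_of_integral_is_integral (p : ℕ) [Fact p.Prime] (n : ℕ)
    (B A : Type) [CommRing B] [CommRing A] [Algebra B A] [Algebra.IsIntegral B A]
    (mapT : TruncatedWittVector p (n + 1) B →+* TruncatedWittVector p (n + 1) A)
    (hmap : ∀ x : WittVector p B, mapT (WittVector.truncate (n + 1) x) =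
      WittVector.truncate (n + 1) (WittVector.map (algebraMap B A) x)) :
    mapT.IsIntegral := by
  let ghostB := TruncatedWittVector.ghostMap p (n + 1) B
  let ghostA := TruncatedWittVector.ghostMap p (n + 1) A
  have hcoord : ∀ i, (Pi.evalRingHom _ i).comp (ghostA.comp mapT) =
      (algebraMap B A).comp ((Pi.evalRingHom _ i).comp ghostB) := by
    intro i
    ext z
    obtain ⟨x, rfl⟩ := WittVector.truncate_surjective p (n + 1) B z
    simp [ghostA, ghostB, hmap, TruncatedWittVector.ghostMap_truncate,
      WittVector.ghostComponent_map]
  refine .tower_bot_of_ker_le_nilradical mapT ghostA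
    TruncatedWittVector.ker_ghostMap_le_nilradical (.of_forall_evalRingHom_comp _ fun i => ?_)
  rw [hcoord]
  exact (TruncatedWittVector.evalRingHom_comp_ghostMap_isIntegral i).trans _ _
    (algebraMap_isIntegral_iff.mpr inferInstance)
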